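/- arXiv:0912.3222 — 7 statements merged into one kernel-verified Lean document; each statement's English description precedes it below -/
import Mathlib

section
/- Let T be an n×n real matrix and b ∈ ℝⁿ. If x ∈ ℝⁿ satisfies the piecewise linear system min{0,x} + T·max{0,x} = b, then the vector y = max{0,x} is a solution of the linear complementarity problem: T·y ≥ b (componentwise), y ≥ 0 (componentwise), and yᵀ(T·y − b) = 0. -/
open Matrix

/-- Spectral radius of a real matrix: supremum of absolute values of its complex eigenvalues. -/
noncomputable def specRad {n : ℕ} (B : Matrix (Fin n) (Fin n) ℝ) : ℝ :=
  sSup {r : ℝ | ∃ μ ∈ spectrum ℂ (B.map (fun a => (a : ℂ))), r = ‖μ‖}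

/-- `T` is an M-matrix: `T = α•I - B` with `B ≥ O` entrywise and `ρ(B) < α`. -/
def IsMmat {n : ℕ} (T : Matrix (Fin n) (Fin n) ℝ) : Prop :=
  ∃ (α : ℝ) (B : Matrix (Fin n) (Fin n) ℝ),
    (∀ i j, 0 ≤ B i j) ∧ specRad B < α ∧ T = α • (1 : Matrix (Fin n) (Fin n) ℝ) - B

/-- `P(x)`: diagonal matrix with i-th entry `1` if `x i ≥ 0`, else `0`. -/
noncomputable def Pmat {n : ℕ} (x : Fin n → ℝ) : Matrix (Fin n) (Fin n) ℝ :=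
  Matrix.diagonal fun i => if 0 ≤ x i then 1 else 0

/-- Irreducibility of a matrix (strong connectivity of its directed graph). -/
def IsIrred {n : ℕ} (T : Matrix (Fin n) (Fin n) ℝ) : Prop :=
  ∀ S : Finset (Fin n), S.Nonempty → S ≠ Finset.univ → ∃ i ∈ S, ∃ j ∉ S, T i j ≠ 0

/-- Condition T2: `T` is irreducible, `null(Tᵀ) = span(v)`, `null(T) = span(w)` with
`v, w > 0` componentwise, and `T + D` is an M-matrix for every diagonal `D ≥ O`, `D ≠ O`. -/
def CondT2 {n : ℕ} (T : Matrix (Fin n) (Fin n) ℝ) (v w : Fin n → ℝ) : Prop :=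
  IsIrred T ∧ (∀ i, 0 < v i) ∧ (∀ i, 0 < w i) ∧
  LinearMap.ker (Matrix.mulVecLin Tᵀ) = Submodule.span ℝ {v} ∧
  LinearMap.ker (Matrix.mulVecLin T) = Submodule.span ℝ {w} ∧
  (∀ d : Fin n → ℝ, (∀ i, 0 ≤ d i) → d ≠ 0 → IsMmat (T + Matrix.diagonal d))

lemma max_zero_mul_min_zero {α : Type*} [MulZeroClass α] [LinearOrder α] (a : α) :
    max 0 a * min 0 a = 0 := by
  rcases le_total a 0 with ha | ha
  · rw [max_eq_left ha, zero_mul]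
  · rw [min_eq_left ha, mul_zero]

/-- If `x` solves `min{0,x} + T·max{0,x} = b`, then `y = max{0,x}` solves the
LCP: `T·y ≥ b`, `y ≥ 0`, `yᵀ(T·y − b) = 0`. -/
theorem stmt0 {n : ℕ} (T : Matrix (Fin n) (Fin n) ℝ) (b x : Fin n → ℝ)
    (h : (fun i => min 0 (x i)) + T *ᵥ (fun i => max 0 (x i)) = b) :
    ∀ y : Fin n → ℝ, y = (fun i => max 0 (x i)) →
      (∀ i, b i ≤ (T *ᵥ y) i) ∧ (∀ i, 0 ≤ y i) ∧ y ⬝ᵥ (T *ᵥ y - b) = 0 := by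
  rintro y rfl
  have residual : T *ᵥ (fun i => max 0 (x i)) - b = -fun i => min 0 (x i) := by
    rw [← h]
    abel
  refine ⟨fun i => ?_, fun i => le_max_left 0 (x i), ?_⟩
  · have hi := congrFun residual i
    simp only [Pi.sub_apply, Pi.neg_apply] at hi
    linarith [min_le_left 0 (x i)]
  · rw [residual, dotProduct_neg, neg_eq_zero]
    exact Finset.sum_eq_zero fun i _ => max_zero_mul_min_zero (x i)
end

section
/- Let T be an n×n real M-matrix, i.e. T = αI − B with B ≥ O entrywise and ρ(B) < α, where ρ denotes the spectral radius. Then for any diagonal matrix P with O ≤ P ≤ I (entrywise), both I − P + T·P and I − P + P·T are M-matrices; in particular their inverses exist and satisfy (I − P + T·P)⁻¹ ≥ O and (I − P + P·T)⁻¹ ≥ O entrywise. -/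
open Matrix

/-!
Write `T = α • 1 - B`. Then `1 - P + T * P = (α + 1) • 1 - B₁` with
`B₁ = diagonal (α • (1 - p) + p) + B * P ≥ 0`. If `B₁` had an eigenvalue of modulus `≥ α + 1`, the
moduli `z` of an eigenvector would satisfy `(α + 1) • z ≤ B₁ *ᵥ z`, hence `α • w ≤ B *ᵥ w` for
`w = P *ᵥ z ≥ 0`. Since `(α • 1 - B)⁻¹ ≥ 0` (a Neumann series, convergent by Gelfand's formula),
this forces `w = 0` and then `z = 0`. The matrix `1 - P + P * T` is the transpose of
`1 - P + Tᵀ * P`, and `Tᵀ` is again an M-matrix.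
-/

open Filter Topology

section SpectralRadius

variable {n : ℕ}

lemma specRad_nonneg (B : Matrix (Fin n) (Fin n) ℝ) : 0 ≤ specRad B :=
  Real.sSup_nonneg <| by rintro r ⟨μ, -, rfl⟩; exact norm_nonneg μ

lemma norm_le_specRad {B : Matrix (Fin n) (Fin n) ℝ} {μ : ℂ}
    (hμ : μ ∈ spectrum ℂ (B.map (fun a => (a : ℂ)))) : ‖μ‖ ≤ specRad B :=
  le_csSup (((Matrix.finite_spectrum _).image (‖·‖)).bddAbove.mono
    (by rintro r ⟨ν, hν, rfl⟩; exact ⟨ν, hν, rfl⟩)) ⟨μ, hμ, rfl⟩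

lemma specRad_lt_of_forall_norm_lt {B : Matrix (Fin n) (Fin n) ℝ} {β : ℝ} (hβ : 0 < β)
    (h : ∀ μ ∈ spectrum ℂ (B.map (fun a => (a : ℂ))), ‖μ‖ < β) : specRad B < β := by
  set S := {r : ℝ | ∃ μ ∈ spectrum ℂ (B.map (fun a => (a : ℂ))), r = ‖μ‖}
  have hS : S.Finite := ((Matrix.finite_spectrum _).image (‖·‖)).subset
    (by rintro r ⟨ν, hν, rfl⟩; exact ⟨ν, hν, rfl⟩)
  rcases S.eq_empty_or_nonempty with hS₀ | hS₀
  · simpa [specRad, S, hS₀] using hβ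
  · obtain ⟨μ, hμ, hsup⟩ := hS₀.csSup_mem hS
    simpa only [specRad, ← hsup] using h μ hμ

lemma specRad_transpose (B : Matrix (Fin n) (Fin n) ℝ) : specRad Bᵀ = specRad B := by
  have : spectrum ℂ (Bᵀ.map (fun a => (a : ℂ))) = spectrum ℂ (B.map (fun a => (a : ℂ))) := by
    ext μ
    rw [Matrix.transpose_map, Matrix.mem_spectrum_iff_isRoot_charpoly,
      Matrix.mem_spectrum_iff_isRoot_charpoly, Matrix.charpoly_transpose]
  simp only [specRad, this]

lemma exists_nonneg_ne_zero_norm_mul_le_mulVec {B : Matrix (Fin n) (Fin n) ℝ}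
    (hB : ∀ i j, 0 ≤ B i j) {μ : ℂ} (hμ : μ ∈ spectrum ℂ (B.map (fun a => (a : ℂ)))) :
    ∃ z : Fin n → ℝ, (∀ i, 0 ≤ z i) ∧ z ≠ 0 ∧ ∀ i, ‖μ‖ * z i ≤ (B *ᵥ z) i := by
  rw [← Matrix.spectrum_toLin', ← Module.End.hasEigenvalue_iff_mem_spectrum] at hμ
  obtain ⟨u, hu, hu₀⟩ := hμ.exists_hasEigenvector
  rw [Module.End.mem_eigenspace_iff, Matrix.toLin'_apply] at hu
  refine ⟨fun i => ‖u i‖, fun i => norm_nonneg _, fun h => hu₀ ?_, fun i => ?_⟩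
  · funext i; simpa using congrFun h i
  · calc ‖μ‖ * ‖u i‖ = ‖∑ j, (B i j : ℂ) * u j‖ := by
          rw [← norm_mul, ← smul_eq_mul, ← Pi.smul_apply, ← hu]; rfl
      _ ≤ ∑ j, ‖(B i j : ℂ) * u j‖ := norm_sum_le _ _
      _ = (B *ᵥ fun i => ‖u i‖) i := by
          simp [Matrix.mulVec, dotProduct, Complex.norm_real, abs_of_nonneg (hB _ _)]

end SpectralRadius

lemma eventually_norm_pow_le_of_spectralRadius_lt {A : Type*} [NormedRing A] [NormedAlgebra ℂ A]
    [CompleteSpace A] (a : A) {r : NNReal} (h : spectralRadius ℂ a < r) :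
    ∀ᶠ k : ℕ in atTop, ‖a ^ k‖ ≤ r ^ k := by
  filter_upwards [(spectrum.gelfand_formula a).eventually (gt_mem_nhds h),
    eventually_gt_atTop 0] with k hk hk₀
  rw [one_div, ENNReal.rpow_inv_lt_iff (by positivity), ENNReal.rpow_natCast] at hk
  exact_mod_cast hk.le

section PowerDecay

attribute [local instance] Matrix.linftyOpNormedRing Matrix.linftyOpNormedAlgebra

variable {n : ℕ}

lemma tendsto_inv_smul_pow_of_specRad_lt {B : Matrix (Fin n) (Fin n) ℝ} {α : ℝ}
    (hρ : specRad B < α) : Tendsto (fun k => (α⁻¹ • B) ^ k) atTop (𝓝 0) := by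
  rcases isEmpty_or_nonempty (Fin n) with hn | hn
  · simp [Subsingleton.elim _ (0 : Matrix (Fin n) (Fin n) ℝ)]
  have hα : 0 < α := (specRad_nonneg B).trans_lt hρ
  obtain ⟨r, hBr, hrα⟩ := exists_between hρ
  have hr₀ : 0 ≤ r := (specRad_nonneg B).trans hBr.le
  have hr : spectralRadius ℂ (B.map (fun a => (a : ℂ))) < r.toNNReal :=
    spectrum.spectralRadius_lt_of_forall_lt _ fun μ hμ => by
      rw [← NNReal.coe_lt_coe, coe_nnnorm, Real.coe_toNNReal r hr₀]
      exact (norm_le_specRad hμ).trans_lt hBr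
  have hnorm : ∀ k, ‖(B.map (fun a => (a : ℂ))) ^ k‖ = ‖B ^ k‖ := fun k => by
    erw [← Matrix.map_pow B Complex.ofRealHom k]
    simp [Matrix.linfty_opNorm_def, Matrix.map_apply]
  refine squeeze_zero_norm' ?_ (tendsto_pow_atTop_nhds_zero_of_lt_one (by positivity)
    ((div_lt_one hα).2 hrα))
  filter_upwards [eventually_norm_pow_le_of_spectralRadius_lt _ hr] with k hk
  rw [hnorm, Real.coe_toNNReal r hr₀] at hk
  calc ‖(α⁻¹ • B) ^ k‖ = α⁻¹ ^ k * ‖B ^ k‖ := by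
        rw [smul_pow, norm_smul, norm_pow, Real.norm_of_nonneg (by positivity)]
    _ ≤ α⁻¹ ^ k * r ^ k := by gcongr
    _ = (r / α) ^ k := by rw [div_eq_inv_mul, mul_pow]

end PowerDecay

section Neumann

variable {m : Type*} [Fintype m] [DecidableEq m] {A : Matrix m m ℝ}

lemma isUnit_one_sub_of_tendsto_pow (hA : Tendsto (A ^ ·) atTop (𝓝 0)) : IsUnit (1 - A) := by
  rw [Matrix.isUnit_iff_isUnit_det, isUnit_iff_ne_zero]
  intro hdet
  obtain ⟨v, hv, hAv⟩ := Matrix.exists_mulVec_eq_zero_iff.mpr hdet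
  rw [Matrix.sub_mulVec, Matrix.one_mulVec, sub_eq_zero] at hAv
  have hfix : ∀ k, (A ^ k) *ᵥ v = v := fun k => by
    induction k with
    | zero => simp
    | succ k ih => rw [pow_succ, ← Matrix.mulVec_mulVec, ← hAv, ih]
  have hlim : Tendsto (fun k => (A ^ k) *ᵥ v) atTop (𝓝 (0 *ᵥ v)) :=
    ((continuous_id.matrix_mulVec continuous_const).tendsto _).comp hA
  simp only [hfix, Matrix.zero_mulVec] at hlim
  exact hv (tendsto_nhds_unique tendsto_const_nhds hlim)

lemma inv_one_sub_nonneg_of_tendsto_pow (hA₀ : ∀ i j, 0 ≤ A i j)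
    (hA : Tendsto (A ^ ·) atTop (𝓝 0)) (i j : m) : 0 ≤ (1 - A)⁻¹ i j := by
  have hdet := (Matrix.isUnit_iff_isUnit_det _).mp (isUnit_one_sub_of_tendsto_pow hA)
  have hsum : ∀ k, ∑ l ∈ Finset.range k, A ^ l = (1 - A ^ k) * (1 - A)⁻¹ := fun k => by
    rw [← geom_sum_mul_neg, mul_assoc, Matrix.mul_nonsing_inv _ hdet, mul_one]
  have hlim : Tendsto (fun k => (1 - A ^ k) * (1 - A)⁻¹) atTop (𝓝 ((1 - 0) * (1 - A)⁻¹)) :=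
    (tendsto_const_nhds.sub hA).mul_const _
  rw [sub_zero, one_mul] at hlim
  refine ge_of_tendsto' (tendsto_pi_nhds.mp (tendsto_pi_nhds.mp hlim i) j) fun k => ?_
  rw [← hsum, Matrix.sum_apply]
  exact Finset.sum_nonneg fun l _ => Matrix.pow_apply_nonneg hA₀ l i j

end Neumann

section MMatrix

variable {n : ℕ} {B : Matrix (Fin n) (Fin n) ℝ} {α : ℝ}

lemma smul_one_sub_eq_smul_one_sub_inv_smul (hα : α ≠ 0) :
    α • (1 : Matrix (Fin n) (Fin n) ℝ) - B = α • (1 - α⁻¹ • B) := by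
  rw [smul_sub, smul_smul, mul_inv_cancel₀ hα, one_smul]

lemma isUnit_smul_one_sub_of_specRad_lt (hρ : specRad B < α) :
    IsUnit (α • (1 : Matrix (Fin n) (Fin n) ℝ) - B) := by
  have hα : α ≠ 0 := ((specRad_nonneg B).trans_lt hρ).ne'
  rw [smul_one_sub_eq_smul_one_sub_inv_smul hα]
  exact (isUnit_one_sub_of_tendsto_pow (tendsto_inv_smul_pow_of_specRad_lt hρ)).smul
    (Units.mk0 α hα)

lemma inv_smul_one_sub_nonneg_of_specRad_lt (hB : ∀ i j, 0 ≤ B i j) (hρ : specRad B < α)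
    (i j : Fin n) : 0 ≤ (α • (1 : Matrix (Fin n) (Fin n) ℝ) - B)⁻¹ i j := by
  have hα : 0 < α := (specRad_nonneg B).trans_lt hρ
  have hA := tendsto_inv_smul_pow_of_specRad_lt hρ
  have hdet := (Matrix.isUnit_iff_isUnit_det _).mp (isUnit_one_sub_of_tendsto_pow hA)
  have := invertibleOfNonzero hα.ne'
  have hinv : (α • (1 - α⁻¹ • B))⁻¹ = α⁻¹ • (1 - α⁻¹ • B)⁻¹ := by
    rw [Matrix.inv_smul _ α hdet, invOf_eq_inv]
  rw [smul_one_sub_eq_smul_one_sub_inv_smul hα.ne', hinv, Matrix.smul_apply, smul_eq_mul]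
  exact mul_nonneg (inv_nonneg.mpr hα.le) (inv_one_sub_nonneg_of_tendsto_pow
    (fun i j => mul_nonneg (inv_nonneg.mpr hα.le) (hB i j)) hA i j)

lemma eq_zero_of_smul_le_mulVec (hB : ∀ i j, 0 ≤ B i j) (hρ : specRad B < α)
    {w : Fin n → ℝ} (hw : ∀ i, 0 ≤ w i) (hBw : ∀ i, α * w i ≤ (B *ᵥ w) i) : w = 0 := by
  set M := α • (1 : Matrix (Fin n) (Fin n) ℝ) - B
  have hdet := (Matrix.isUnit_iff_isUnit_det M).mp (isUnit_smul_one_sub_of_specRad_lt hρ)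
  have hMw : ∀ i, (M *ᵥ w) i ≤ 0 := fun i => by
    simpa [M, Matrix.sub_mulVec, Matrix.smul_mulVec] using hBw i
  funext i
  refine le_antisymm ?_ (hw i)
  rw [← Matrix.one_mulVec w, ← Matrix.nonsing_inv_mul M hdet, ← Matrix.mulVec_mulVec]
  simp only [Matrix.mulVec, dotProduct, Pi.zero_apply]
  exact Finset.sum_nonpos fun k _ => mul_nonpos_of_nonneg_of_nonpos
    (inv_smul_one_sub_nonneg_of_specRad_lt hB hρ i k) (hMw k)

lemma specRad_lt_of_forall_smul_le_mulVec (hB : ∀ i j, 0 ≤ B i j) (hα : 0 < α)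
    (h : ∀ z : Fin n → ℝ, (∀ i, 0 ≤ z i) → (∀ i, α * z i ≤ (B *ᵥ z) i) → z = 0) :
    specRad B < α := by
  refine specRad_lt_of_forall_norm_lt hα fun μ hμ => not_le.mp fun hμα => ?_
  obtain ⟨z, hz, hz₀, hBz⟩ := exists_nonneg_ne_zero_norm_mul_le_mulVec hB hμ
  exact hz₀ (h z hz fun i => (mul_le_mul_of_nonneg_right hμα (hz i)).trans (hBz i))

end MMatrix

section Perturbation

variable {n : ℕ} {B : Matrix (Fin n) (Fin n) ℝ} {α : ℝ} {p : Fin n → ℝ}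

lemma diagonal_add_mul_diagonal_nonneg (hB : ∀ i j, 0 ≤ B i j) (hα : 0 ≤ α)
    (hp : ∀ i, 0 ≤ p i ∧ p i ≤ 1) (i j : Fin n) :
    0 ≤ (Matrix.diagonal (fun i => α * (1 - p i) + p i) + B * Matrix.diagonal p) i j := by
  rw [Matrix.add_apply, Matrix.mul_diagonal, Matrix.diagonal_apply]
  have := hp i
  have := hp j
  split_ifs <;> nlinarith [hB i j]

lemma specRad_diagonal_add_mul_diagonal_lt (hB : ∀ i j, 0 ≤ B i j) (hρ : specRad B < α)
    (hp : ∀ i, 0 ≤ p i ∧ p i ≤ 1) :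
    specRad (Matrix.diagonal (fun i => α * (1 - p i) + p i) + B * Matrix.diagonal p) < α + 1 := by
  have hα : 0 < α := (specRad_nonneg B).trans_lt hρ
  refine specRad_lt_of_forall_smul_le_mulVec (diagonal_add_mul_diagonal_nonneg hB hα.le hp)
    (by linarith) fun z hz hsub => ?_
  set w := Matrix.diagonal p *ᵥ z
  have hBw : ∀ i, (1 - p i + α * p i) * z i ≤ (B *ᵥ w) i := fun i => by
    have := hsub i
    rw [Matrix.add_mulVec, ← Matrix.mulVec_mulVec, Pi.add_apply, Matrix.mulVec_diagonal] at this
    linarith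
  have hw_apply : ∀ i, w i = p i * z i := Matrix.mulVec_diagonal p z
  have hw : w = 0 := eq_zero_of_smul_le_mulVec hB hρ
    (fun i => hw_apply i ▸ mul_nonneg (hp i).1 (hz i))
    fun i => by rw [hw_apply]; nlinarith [hBw i, hz i, hp i]
  funext i
  have hd : 0 < 1 - p i + α * p i := by
    rcases (hp i).2.lt_or_eq with h | h
    · nlinarith [hp i]
    · simpa [h] using hα
  have := hBw i
  rw [hw, Matrix.mulVec_zero, Pi.zero_apply] at this
  exact le_antisymm (nonpos_of_mul_nonpos_right this hd) (hz i)

end Perturbation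

namespace IsMmat

variable {n : ℕ} {T : Matrix (Fin n) (Fin n) ℝ}

lemma isUnit (hT : IsMmat T) : IsUnit T := by
  obtain ⟨α, B, -, hρ, rfl⟩ := hT
  exact isUnit_smul_one_sub_of_specRad_lt hρ

lemma inv_nonneg (hT : IsMmat T) (i j : Fin n) : 0 ≤ T⁻¹ i j := by
  obtain ⟨α, B, hB, hρ, rfl⟩ := hT
  exact inv_smul_one_sub_nonneg_of_specRad_lt hB hρ i j

lemma transpose (hT : IsMmat T) : IsMmat Tᵀ := by
  obtain ⟨α, B, hB, hρ, rfl⟩ := hT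
  exact ⟨α, Bᵀ, fun i j => hB j i, (specRad_transpose B).symm ▸ hρ, by
    rw [Matrix.transpose_sub, Matrix.transpose_smul, Matrix.transpose_one]⟩

lemma one_sub_add_mul_diagonal (hT : IsMmat T) {p : Fin n → ℝ} (hp : ∀ i, 0 ≤ p i ∧ p i ≤ 1) :
    IsMmat (1 - Matrix.diagonal p + T * Matrix.diagonal p) := by
  obtain ⟨α, B, hB, hρ, rfl⟩ := hT
  have hα : 0 < α := (specRad_nonneg B).trans_lt hρ
  refine ⟨α + 1, Matrix.diagonal (fun i => α * (1 - p i) + p i) + B * Matrix.diagonal p,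
    diagonal_add_mul_diagonal_nonneg hB hα.le hp, specRad_diagonal_add_mul_diagonal_lt hB hρ hp, ?_⟩
  ext i j
  by_cases h : i = j
  · subst h
    simp only [Matrix.add_apply, Matrix.sub_apply, one_apply_eq, diagonal_apply_eq, mul_diagonal,
      Matrix.smul_apply, smul_eq_mul, mul_one]
    ring
  · simp [h]

lemma one_sub_add_diagonal_mul (hT : IsMmat T) {p : Fin n → ℝ} (hp : ∀ i, 0 ≤ p i ∧ p i ≤ 1) :
    IsMmat (1 - Matrix.diagonal p + Matrix.diagonal p * T) := by
  have h := (hT.transpose.one_sub_add_mul_diagonal hp).transpose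
  rwa [Matrix.transpose_add, Matrix.transpose_sub, Matrix.transpose_mul, Matrix.transpose_one,
    Matrix.transpose_transpose, Matrix.diagonal_transpose] at h

end IsMmat

/-- If `T` is an M-matrix and `P` is diagonal with `O ≤ P ≤ I`, then
`I − P + T·P` and `I − P + P·T` are M-matrices; in particular they are invertible and
their inverses are entrywise nonnegative. -/
theorem stmt3 {n : ℕ} (T : Matrix (Fin n) (Fin n) ℝ) (hT : IsMmat T)
    (p : Fin n → ℝ) (hp : ∀ i, 0 ≤ p i ∧ p i ≤ 1) (P : Matrix (Fin n) (Fin n) ℝ)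
    (hP : P = Matrix.diagonal p) :
    IsMmat (1 - P + T * P) ∧ IsMmat (1 - P + P * T) ∧
    IsUnit (1 - P + T * P) ∧ IsUnit (1 - P + P * T) ∧
    (∀ i j, 0 ≤ (1 - P + T * P)⁻¹ i j) ∧ (∀ i j, 0 ≤ (1 - P + P * T)⁻¹ i j) := by
  subst hP
  have h₁ := hT.one_sub_add_mul_diagonal hp
  have h₂ := hT.one_sub_add_diagonal_mul hp
  exact ⟨h₁, h₂, h₁.isUnit, h₂.isUnit, h₁.inv_nonneg, h₂.inv_nonneg⟩
end

section
/- Let T be an irreducible n×n real matrix satisfying condition T2: null(Tᵀ) = span(v) and null(T) = span(w) with v > 0 and w > 0 componentwise, and T + D is an M-matrix for every diagonal matrix D with D ≥ O and D ≠ O. Then for any diagonal matrix P with O ≤ P ≤ I entrywise and P ≠ I, both matrices I − P + T·P and I − P + P·T are M-matrices; in particular (I − P + T·P)⁻¹ ≥ O and (I − P + P·T)⁻¹ ≥ O entrywise. -/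
/-
Condition T2 makes `T` a Z-matrix (its off-diagonal entries are those of the M-matrix `T + I`)
with `T w = 0` for some `w > 0`. Both `I - P + T P` and `I - P + P T` are then Z-matrices, and
a Z-matrix `A` with `A u > 0` for some `u > 0` is a nonsingular M-matrix: for `α` above the
diagonal of `A`, `B = α I - A ≥ 0` satisfies `B u < α u`, which bounds all eigenvalues of `B`
below `α` (Collatz–Wielandt); and looking at the minimum of `x i / u i` shows that `A x ≥ 0`
forces `x ≥ 0`, whence `A` is invertible with `A⁻¹ ≥ 0`.

For `I - P + P T` one takes `u = w + ε z` with `ε > 0` small, where irreducibility provides `z`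
with `(T z) i > 0` wherever `p i = 1`. Dividing this vector by `p` where `p > 0` and making the
remaining entries large gives a positive vector for `I - P + T P`.
-/

open Matrix

open Filter Topology Finset

section ZMatrix

variable {ι : Type*} [Fintype ι]

def IsZMatrix (A : Matrix ι ι ℝ) : Prop :=
  ∀ i j, i ≠ j → A i j ≤ 0

def IsSemipositive (A : Matrix ι ι ℝ) : Prop :=
  ∃ u : ι → ℝ, (∀ i, 0 < u i) ∧ ∀ i, 0 < (A *ᵥ u) i

theorem IsZMatrix.mulVec_le_mulVec {A : Matrix ι ι ℝ} (hA : IsZMatrix A) {x y : ι → ℝ}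
    (hxy : x ≤ y) {i : ι} (hi : x i = y i) : (A *ᵥ y) i ≤ (A *ᵥ x) i := by
  rw [← sub_nonpos, ← Pi.sub_apply, ← mulVec_sub]
  refine sum_nonpos fun j _ => ?_
  rcases eq_or_ne i j with rfl | hij
  · simp [hi]
  · exact mul_nonpos_of_nonpos_of_nonneg (hA i j hij) (sub_nonneg.2 (hxy j))

theorem IsZMatrix.nonneg_of_mulVec_nonneg {A : Matrix ι ι ℝ} (hA : IsZMatrix A)
    {u : ι → ℝ} (hu : ∀ i, 0 < u i) (hAu : ∀ i, 0 < (A *ᵥ u) i) {x : ι → ℝ}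
    (hAx : ∀ i, 0 ≤ (A *ᵥ x) i) (i : ι) : 0 ≤ x i := by
  by_contra! hxi
  obtain ⟨k, -, hk⟩ := univ.exists_min_image (fun j => x j / u j) ⟨i, mem_univ i⟩
  set t := x k / u k
  have ht : t < 0 := (hk i (mem_univ i)).trans_lt (div_neg_of_neg_of_pos hxi (hu i))
  have hle : (0 : ι → ℝ) ≤ x - t • u := fun j => by
    have := (le_div_iff₀ (hu j)).1 (hk j (mem_univ j))
    simp only [Pi.zero_apply, Pi.sub_apply, Pi.smul_apply, smul_eq_mul]
    linarith
  have hk0 : (0 : ι → ℝ) k = (x - t • u) k := by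
    simp [t, div_mul_cancel₀ _ (hu k).ne']
  have := hA.mulVec_le_mulVec hle hk0
  rw [mulVec_zero, mulVec_sub, mulVec_smul] at this
  simp only [Pi.sub_apply, Pi.smul_apply, smul_eq_mul, Pi.zero_apply] at this
  nlinarith [hAx k, hAu k]

variable [DecidableEq ι]

theorem IsZMatrix.isUnit {A : Matrix ι ι ℝ} (hA : IsZMatrix A) (hs : IsSemipositive A) :
    IsUnit A := by
  obtain ⟨u, hu, hAu⟩ := hs
  have hle : ∀ x y, A *ᵥ x = A *ᵥ y → ∀ i, x i ≤ y i := fun x y hxy i =>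
    sub_nonneg.1 <| hA.nonneg_of_mulVec_nonneg hu hAu (x := y - x)
      (fun j => by simp [mulVec_sub, hxy]) i
  exact mulVec_injective_iff_isUnit.1 fun x y hxy =>
    funext fun i => le_antisymm (hle x y hxy i) (hle y x hxy.symm i)

theorem IsZMatrix.inv_nonneg {A : Matrix ι ι ℝ} (hA : IsZMatrix A) (hs : IsSemipositive A)
    (i j : ι) : 0 ≤ A⁻¹ i j := by
  have hdet : IsUnit A.det := (isUnit_iff_isUnit_det A).1 (hA.isUnit hs)
  obtain ⟨u, hu, hAu⟩ := hs
  have hcol : A *ᵥ (A⁻¹ *ᵥ Pi.single j 1) = Pi.single j 1 := by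
    rw [mulVec_mulVec, mul_nonsing_inv _ hdet, one_mulVec]
  have := hA.nonneg_of_mulVec_nonneg hu hAu (x := A⁻¹ *ᵥ Pi.single j 1)
    (fun k => by rw [hcol]; by_cases h : k = j <;> simp [h]) i
  simpa [mulVec_single_one] using this

theorem IsZMatrix.one_sub_diagonal_add_mul_diagonal {T : Matrix ι ι ℝ} (hT : IsZMatrix T)
    {p : ι → ℝ} (hp : ∀ i, 0 ≤ p i) : IsZMatrix (1 - diagonal p + T * diagonal p) := by
  intro i j hij
  simpa [one_apply_ne hij, diagonal_apply_ne _ hij] using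
    mul_nonpos_of_nonpos_of_nonneg (hT i j hij) (hp j)

theorem IsZMatrix.one_sub_diagonal_add_diagonal_mul {T : Matrix ι ι ℝ} (hT : IsZMatrix T)
    {p : ι → ℝ} (hp : ∀ i, 0 ≤ p i) : IsZMatrix (1 - diagonal p + diagonal p * T) := by
  intro i j hij
  simpa [one_apply_ne hij, diagonal_apply_ne _ hij] using
    mul_nonpos_of_nonneg_of_nonpos (hp i) (hT i j hij)

theorem one_sub_diagonal_add_mul_diagonal_mulVec_apply (T : Matrix ι ι ℝ) (p u : ι → ℝ)
    (i : ι) : ((1 - diagonal p + T * diagonal p) *ᵥ u) i =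
      (1 - p i) * u i + (T *ᵥ fun j => p j * u j) i := by
  have hPu : diagonal p *ᵥ u = fun j => p j * u j := funext (mulVec_diagonal p u)
  simp only [add_mulVec, sub_mulVec, one_mulVec, ← mulVec_mulVec, hPu, Pi.add_apply,
    Pi.sub_apply]
  ring

theorem one_sub_diagonal_add_diagonal_mul_mulVec_apply (T : Matrix ι ι ℝ) (p u : ι → ℝ)
    (i : ι) : ((1 - diagonal p + diagonal p * T) *ᵥ u) i = (1 - p i) * u i + p i * (T *ᵥ u) i := by
  simp only [add_mulVec, sub_mulVec, one_mulVec, ← mulVec_mulVec, Pi.add_apply, Pi.sub_apply,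
    mulVec_diagonal]
  ring

theorem IsSemipositive.one_sub_diagonal_add_mul_diagonal {T : Matrix ι ι ℝ} (hT : IsZMatrix T)
    {p : ι → ℝ} (hp : ∀ i, 0 ≤ p i) (h : IsSemipositive (1 - diagonal p + diagonal p * T)) :
    IsSemipositive (1 - diagonal p + T * diagonal p) := by
  obtain ⟨y, hy, hTy⟩ := h
  set x : ι → ℝ := fun j => if p j = 0 then 0 else y j
  set u : ι → ℝ := fun i => if p i = 0 then 1 + |(T *ᵥ x) i| else y i / p i
  have hpu : (fun j => p j * u j) = x := funext fun j => by
    by_cases hj : p j = 0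
    · simp [x, hj]
    · simp [x, u, hj, mul_div_cancel₀ _ hj]
  refine ⟨u, fun i => ?_, fun i => ?_⟩
  · by_cases hi : p i = 0
    · simp only [u, hi, if_true]; positivity
    · simpa [u, hi] using div_pos (hy i) ((hp i).lt_of_ne' hi)
  rw [one_sub_diagonal_add_mul_diagonal_mulVec_apply, hpu]
  by_cases hi : p i = 0
  · simp only [u, hi, if_true, sub_zero, one_mul]
    linarith [neg_abs_le ((T *ᵥ x) i)]
  have hpi : 0 < p i := (hp i).lt_of_ne' hi
  have hxy : x ≤ y := fun j => by by_cases hj : p j = 0 <;> simp [x, hj, (hy j).le]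
  have hTxy : (T *ᵥ y) i ≤ (T *ᵥ x) i := hT.mulVec_le_mulVec hxy (by simp [x, hi])
  have hyi := hTy i
  rw [one_sub_diagonal_add_diagonal_mul_mulVec_apply] at hyi
  have hdiv : (1 - p i) * u i + (T *ᵥ y) i = ((1 - p i) * y i + p i * (T *ᵥ y) i) / p i := by
    simp only [u, hi, if_false]; field_simp
  have hpos : 0 < (1 - p i) * u i + (T *ᵥ y) i := by rw [hdiv]; positivity
  linarith

theorem exists_norm_mul_le_mulVec_of_mem_spectrum {B : Matrix ι ι ℝ} (hB : ∀ i j, 0 ≤ B i j)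
    {u : ι → ℝ} (hu : ∀ i, 0 < u i) {μ : ℂ}
    (hμ : μ ∈ spectrum ℂ (B.map (fun a => (a : ℂ)))) : ∃ k, ‖μ‖ * u k ≤ (B *ᵥ u) k := by
  rw [← spectrum_toLin', ← Module.End.hasEigenvalue_iff_mem_spectrum] at hμ
  obtain ⟨x, hx⟩ := hμ.exists_hasEigenvector
  have hBx : B.map (fun a => (a : ℂ)) *ᵥ x = μ • x := by
    simpa using hx.apply_eq_smul
  obtain ⟨i, hi⟩ := Function.ne_iff.1 hx.2
  obtain ⟨k, -, hk⟩ := univ.exists_max_image (fun j => ‖x j‖ / u j) ⟨i, mem_univ i⟩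
  have hxj : ∀ j, ‖x j‖ ≤ u j * (‖x k‖ / u k) := fun j => by
    rw [mul_comm, ← div_le_iff₀ (hu j)]; exact hk j (mem_univ j)
  have hxk : 0 < ‖x k‖ := by
    have := (div_pos (norm_pos_iff.2 hi) (hu i)).trans_le (hk i (mem_univ i))
    exact (div_pos_iff_of_pos_right (hu k)).1 this
  refine ⟨k, le_of_mul_le_mul_right ?_ (div_pos hxk (hu k))⟩
  calc ‖μ‖ * u k * (‖x k‖ / u k) = ‖(B.map (fun a => (a : ℂ)) *ᵥ x) k‖ := by
        rw [hBx, Pi.smul_apply, smul_eq_mul, norm_mul, mul_assoc, mul_div_cancel₀ _ (hu k).ne']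
    _ ≤ ∑ j, B k j * ‖x j‖ := by
        refine (norm_sum_le _ _).trans_eq (sum_congr rfl fun j _ => ?_)
        simp [abs_of_nonneg (hB k j)]
    _ ≤ ∑ j, B k j * (u j * (‖x k‖ / u k)) := by gcongr with j; exacts [hB k j, hxj j]
    _ = (B *ᵥ u) k * (‖x k‖ / u k) := by simp only [mulVec, dotProduct, sum_mul, mul_assoc]

end ZMatrix

theorem specRad_lt_of_mulVec_lt {n : ℕ} {B : Matrix (Fin n) (Fin n) ℝ} (hB : ∀ i j, 0 ≤ B i j)
    {u : Fin n → ℝ} (hu : ∀ i, 0 < u i) {α : ℝ} (hα : 0 < α)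
    (hBu : ∀ i, (B *ᵥ u) i < α * u i) : specRad B < α := by
  set S := {r : ℝ | ∃ μ ∈ spectrum ℂ (B.map (fun a => (a : ℂ))), r = ‖μ‖}
  change sSup S < α
  rcases S.eq_empty_or_nonempty with hS | hS
  · rwa [hS, Real.sSup_empty]
  have hfin : S.Finite := ((B.map _).finite_spectrum.image (‖·‖)).subset
    (by rintro _ ⟨μ, hμ, rfl⟩; exact ⟨μ, hμ, rfl⟩)
  refine (hfin.csSup_lt_iff hS).2 ?_
  rintro _ ⟨μ, hμ, rfl⟩
  obtain ⟨k, hk⟩ := exists_norm_mul_le_mulVec_of_mem_spectrum hB hu hμ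
  exact lt_of_mul_lt_mul_right (hk.trans_lt (hBu k)) (hu k).le

theorem IsMmat.isZMatrix {n : ℕ} {A : Matrix (Fin n) (Fin n) ℝ} (h : IsMmat A) : IsZMatrix A := by
  obtain ⟨α, B, hB, -, rfl⟩ := h
  intro i j hij
  simpa [one_apply_ne hij] using hB i j

theorem IsZMatrix.isMmat {n : ℕ} {A : Matrix (Fin n) (Fin n) ℝ} (hA : IsZMatrix A)
    (hs : IsSemipositive A) : IsMmat A := by
  obtain ⟨u, hu, hAu⟩ := hs
  set α := 1 + ∑ i, |A i i|
  have hdiag : ∀ i, A i i ≤ α := fun i => calc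
    A i i ≤ |A i i| := le_abs_self _
    _ ≤ ∑ j, |A j j| := single_le_sum (fun j _ => abs_nonneg (A j j)) (mem_univ i)
    _ ≤ α := le_add_of_nonneg_left zero_le_one
  have hB : ∀ i j, 0 ≤ (α • 1 - A) i j := fun i j => by
    rcases eq_or_ne i j with rfl | hij
    · simpa using hdiag i
    · simpa [one_apply_ne hij] using hA i j hij
  have hBu : ∀ i, ((α • 1 - A) *ᵥ u) i < α * u i := fun i => by
    simpa [sub_mulVec, smul_mulVec] using hAu i
  exact ⟨α, α • 1 - A, hB, specRad_lt_of_mulVec_lt hB hu (by positivity) hBu,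
    (sub_sub_cancel _ _).symm⟩

theorem eventually_pos_add_mul {a : ℝ} (ha : 0 < a) (b : ℝ) :
    ∀ᶠ ε in 𝓝[>] (0 : ℝ), 0 < a + ε * b := by
  have : Continuous fun ε : ℝ => a + ε * b := by fun_prop
  exact ((this.tendsto' 0 a (by simp)).eventually (lt_mem_nhds ha)).filter_mono nhdsWithin_le_nhds

theorem IsIrred.exists_mulVec_pos {n : ℕ} {T : Matrix (Fin n) (Fin n) ℝ} (hirr : IsIrred T)
    (hT : IsZMatrix T) (W : Finset (Fin n)) (hW : W ≠ univ) :
    ∃ z, ∀ i ∈ W, 0 < (T *ᵥ z) i := by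
  classical
  induction W using Finset.strongInduction with
  | H W ih =>
  rcases W.eq_empty_or_nonempty with rfl | hne
  · exact ⟨0, by simp⟩
  -- peel off the rows of `W` reaching outside `W`: there `T *ᵥ y` below is already positive
  set W' := W.filter fun i => ∀ j ∉ W, T i j = 0
  have hW' : W' ⊂ W := filter_ssubset.2 (by simpa using hirr W hne hW)
  obtain ⟨z', hz'⟩ := ih W' hW' fun h => hW (univ_subset_iff.1 (h ▸ hW'.subset))
  set y : Fin n → ℝ := fun j => if j ∈ W then 0 else -1
  have hterm : ∀ i ∈ W, ∀ j, 0 ≤ T i j * y j := fun i hi j => by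
    by_cases hj : j ∈ W
    · simp [y, hj]
    · simpa [y, hj] using hT i j (ne_of_mem_of_not_mem hi hj)
  have hy : ∀ i ∈ W, 0 ≤ (T *ᵥ y) i := fun i hi =>
    sum_nonneg (s := univ) fun j _ => hterm i hi j
  have hy' : ∀ i ∈ W, i ∉ W' → 0 < (T *ᵥ y) i := fun i hi hi' => by
    obtain ⟨j, hj, hTij⟩ : ∃ j ∉ W, T i j ≠ 0 := by simpa [W', hi] using hi'
    refine sum_pos' (fun j _ => hterm i hi j) ⟨j, mem_univ j, ?_⟩
    simpa [y, hj] using (hT i j (ne_of_mem_of_not_mem hi hj)).lt_of_ne hTij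
  have hev : ∀ᶠ s in 𝓝[>] (0 : ℝ), ∀ i ∈ W, 0 < (T *ᵥ y) i + s * (T *ᵥ z') i := by
    refine (eventually_all_finset W).2 fun i hi => ?_
    by_cases hi' : i ∈ W'
    · exact eventually_mem_nhdsWithin.mono fun s hs =>
        add_pos_of_nonneg_of_pos (hy i hi) (mul_pos hs (hz' i hi'))
    · exact eventually_pos_add_mul (hy' i hi hi') _
  obtain ⟨s, hs⟩ := hev.exists
  exact ⟨y + s • z', fun i hi => by simpa [mulVec_add, mulVec_smul] using hs i hi⟩

theorem isSemipositive_one_sub_diagonal_add_diagonal_mul {n : ℕ} {T : Matrix (Fin n) (Fin n) ℝ}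
    (hirr : IsIrred T) (hT : IsZMatrix T) {w : Fin n → ℝ} (hw : ∀ i, 0 < w i)
    (hTw : T *ᵥ w = 0) {p : Fin n → ℝ} (hp : ∀ i, p i ≤ 1) (hp1 : ∃ i, p i ≠ 1) :
    IsSemipositive (1 - diagonal p + diagonal p * T) := by
  obtain ⟨z, hz⟩ := hirr.exists_mulVec_pos hT (univ.filter (p · = 1))
    (by obtain ⟨i, hi⟩ := hp1; intro h; simpa [hi] using h.ge (mem_univ i))
  -- `y = w + ε • z`: `T *ᵥ y = ε • T *ᵥ z` is positive where `p = 1`, and small elsewhere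
  have hev : ∀ᶠ ε in 𝓝[>] (0 : ℝ), (∀ i, 0 < w i + ε * z i) ∧
      ∀ i, p i < 1 → 0 < (1 - p i) * w i + ε * ((1 - p i) * z i + p i * (T *ᵥ z) i) := by
    refine (eventually_all.2 fun i => eventually_pos_add_mul (hw i) (z i)).and
      (eventually_all.2 fun i => ?_)
    by_cases hi : p i < 1
    · exact (eventually_pos_add_mul (mul_pos (sub_pos.2 hi) (hw i)) _).mono fun _ h _ => h
    · exact Eventually.of_forall fun _ h => absurd h hi
  obtain ⟨ε, ⟨hy, hpy⟩, hε⟩ := (hev.and self_mem_nhdsWithin).exists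
  refine ⟨w + ε • z, hy, fun i => ?_⟩
  rw [one_sub_diagonal_add_diagonal_mul_mulVec_apply, mulVec_add, mulVec_smul, hTw]
  rcases (hp i).lt_or_eq with hi | hi
  · convert hpy i hi using 1
    simp only [Pi.add_apply, Pi.smul_apply, smul_eq_mul, Pi.zero_apply]
    ring
  · simpa [hi] using mul_pos hε (hz i (by simp [hi]))

/-- If `T` is irreducible and satisfies condition T2, then for any diagonal
`P` with `O ≤ P ≤ I` and `P ≠ I`, both `I − P + T·P` and `I − P + P·T` are M-matrices;
in particular they are invertible with entrywise nonnegative inverses. -/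
theorem stmt4 {n : ℕ} (T : Matrix (Fin n) (Fin n) ℝ) (v w : Fin n → ℝ)
    (hT : CondT2 T v w)
    (p : Fin n → ℝ) (hp : ∀ i, 0 ≤ p i ∧ p i ≤ 1) (P : Matrix (Fin n) (Fin n) ℝ)
    (hP : P = Matrix.diagonal p) (hPne : P ≠ 1) :
    IsMmat (1 - P + T * P) ∧ IsMmat (1 - P + P * T) ∧
    IsUnit (1 - P + T * P) ∧ IsUnit (1 - P + P * T) ∧
    (∀ i j, 0 ≤ (1 - P + T * P)⁻¹ i j) ∧ (∀ i j, 0 ≤ (1 - P + P * T)⁻¹ i j) := by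
  obtain ⟨hirr, -, hw, -, hker, hM⟩ := hT
  subst hP
  obtain ⟨i₀, hi₀⟩ : ∃ i, p i ≠ 1 := by
    by_contra! h
    exact hPne (by rw [funext h, diagonal_one])
  have hTZ : IsZMatrix T := fun i j hij => by
    simpa [one_apply_ne hij] using
      (hM 1 (fun _ => zero_le_one) fun h => one_ne_zero (congrFun h i₀)).isZMatrix i j hij
  have hTw : T *ᵥ w = 0 := by
    simpa using (hker.ge (Submodule.mem_span_singleton_self w) : w ∈ LinearMap.ker T.mulVecLin)
  have hs₂ := isSemipositive_one_sub_diagonal_add_diagonal_mul hirr hTZ hw hTw (fun i => (hp i).2)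
    ⟨i₀, hi₀⟩
  have hs₁ := hs₂.one_sub_diagonal_add_mul_diagonal hTZ fun i => (hp i).1
  have hZ₁ := hTZ.one_sub_diagonal_add_mul_diagonal fun i => (hp i).1
  have hZ₂ := hTZ.one_sub_diagonal_add_diagonal_mul fun i => (hp i).1
  exact ⟨hZ₁.isMmat hs₁, hZ₂.isMmat hs₂, hZ₁.isUnit hs₁, hZ₂.isUnit hs₂, hZ₁.inv_nonneg hs₁,
    hZ₂.inv_nonneg hs₂⟩
end

section
/- Let T be an irreducible n×n real matrix satisfying condition T2 (null(Tᵀ) = span(v), null(T) = span(w) with v, w > 0 componentwise, and T + D is an M-matrix for every diagonal D ≥ O, D ≠ O), and let b ∈ ℝⁿ satisfy vᵀb ≤ 0. Consider the iteration P⁰ = O, (I − Pᵏ + T·Pᵏ)·x^{k+1} = b, Pᵏ = P(xᵏ). Then at every step k with Pᵏ ≠ I, either the exit condition (P^{k+1} − Pᵏ)·x^{k+1} = 0 holds (so x^{k+1} solves the piecewise linear system), or P^{k+1} ≠ I; consequently the matrix I − Pᵏ + T·Pᵏ is an M-matrix at every step and the iteration is well defined until convergence. -/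
/-!
For a 0/1 diagonal `P ≠ I`, the matrix `A = I - P + T P` is a Z-matrix with `A u ≥ 0` for a
positive `u` built from the right null vector `w`, and irreducibility of `T` makes every set on
which `A u` vanishes leak along an edge of `A`. A Collatz–Wielandt argument then bounds the
spectral radius of `α I - A` strictly below `α`, so `A` is a nonsingular M-matrix.
If instead `Pᵏ⁺¹ = I`, i.e. `xᵏ⁺¹ ≥ 0`, pairing `A(xᵏ) xᵏ⁺¹ = b` with the left null vector `v`
gives `vᵀ (I - Pᵏ) xᵏ⁺¹ = vᵀ b ≤ 0`, which forces `Pᵏ xᵏ⁺¹ = xᵏ⁺¹`: the exit condition holds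
and `xᵏ⁺¹` solves the piecewise linear system.
-/

open Matrix

section Spectrum

variable {ι : Type*} [Fintype ι]

/-- If `‖μ‖ ≥ α`, the set where `|z| / u` is maximal would be closed under the edges of `B`. -/
lemma norm_lt_of_mulVec_eq_smul {B : Matrix ι ι ℝ} (hB : ∀ i j, 0 ≤ B i j) {u : ι → ℝ}
    (hu : ∀ i, 0 < u i) {α : ℝ} (hBu : ∀ i, (B *ᵥ u) i ≤ α * u i)
    (hleak : ∀ Q : Finset ι, Q.Nonempty → (∀ i ∈ Q, (B *ᵥ u) i = α * u i) →
      ∃ i ∈ Q, ∃ j ∉ Q, B i j ≠ 0)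
    {μ : ℂ} {z : ι → ℂ} (hz : z ≠ 0) (heig : B.map (fun a => (a : ℂ)) *ᵥ z = μ • z) :
    ‖μ‖ < α := by
  by_contra! hμ
  set a : ι → ℝ := fun i => ‖z i‖
  obtain ⟨i₁, hi₁⟩ := Function.ne_iff.mp hz
  obtain ⟨i₀, -, hi₀⟩ :=
    Finset.exists_max_image Finset.univ (fun i => a i / u i) ⟨i₁, Finset.mem_univ _⟩
  set m := a i₀ / u i₀
  have ha_le : ∀ j, a j ≤ m * u j := fun j =>
    (div_le_iff₀ (hu j)).mp (hi₀ j (Finset.mem_univ _))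
  have hm : 0 < m :=
    pos_of_mul_pos_left ((norm_pos_iff.mpr hi₁).trans_le (ha_le i₁)) (hu i₁).le
  have hBa : ∀ i, ∑ j, B i j * a j ≤ m * (B *ᵥ u) i := fun i => by
    simp only [mulVec, dotProduct, Finset.mul_sum]
    exact Finset.sum_le_sum fun j _ => by nlinarith [hB i j, ha_le j]
  have htri : ∀ i, α * a i ≤ ∑ j, B i j * a j := fun i => calc
    α * a i ≤ ‖μ‖ * a i := mul_le_mul_of_nonneg_right hμ (norm_nonneg _)
    _ = ‖∑ j, (B i j : ℂ) * z j‖ := by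
      rw [← norm_mul, ← smul_eq_mul, ← Pi.smul_apply, ← heig]; rfl
    _ ≤ ∑ j, B i j * a j := (norm_sum_le _ _).trans_eq <| Finset.sum_congr rfl fun j _ => by
      rw [norm_mul, Complex.norm_real, Real.norm_of_nonneg (hB i j)]
  set Q := Finset.univ.filter fun i => a i = m * u i
  have hQ : ∀ i ∈ Q, (B *ᵥ u) i = α * u i ∧ ∑ j, B i j * a j = m * (B *ᵥ u) i := by
    intro i hi
    have h₁ : m * (α * u i) ≤ ∑ j, B i j * a j := by
      have := htri i
      rw [(Finset.mem_filter.mp hi).2] at this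
      linarith
    have h₂ := mul_le_mul_of_nonneg_left (hBu i) hm.le
    have hBu_eq : m * (B *ᵥ u) i = m * (α * u i) := le_antisymm h₂ (h₁.trans (hBa i))
    exact ⟨mul_left_cancel₀ hm.ne' hBu_eq, le_antisymm (hBa i) (hBu_eq ▸ h₁)⟩
  obtain ⟨i, hi, j, hj, hBij⟩ := hleak Q ⟨i₀, by simp [Q, m, div_mul_cancel₀ _ (hu i₀).ne']⟩
    fun i hi => (hQ i hi).1
  have hterm : B i j * a j = B i j * (m * u j) := by
    have := (hQ i hi).2
    simp only [mulVec, dotProduct, Finset.mul_sum] at this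
    refine (Finset.sum_eq_sum_iff_of_le (f := fun k => B i k * a k)
      (g := fun k => B i k * (m * u k)) fun k _ => ?_).mp ?_ j (Finset.mem_univ _)
    · exact mul_le_mul_of_nonneg_left (ha_le k) (hB i k)
    · rw [this]; exact Finset.sum_congr rfl fun k _ => by ring
  exact hj (Finset.mem_filter.mpr ⟨Finset.mem_univ _,
    mul_left_cancel₀ (lt_of_le_of_ne (hB i j) (Ne.symm hBij)).ne' hterm⟩)

lemma exists_mulVec_eq_smul_of_mem_spectrum [DecidableEq ι] {M : Matrix ι ι ℂ} {μ : ℂ}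
    (hμ : μ ∈ spectrum ℂ M) : ∃ z : ι → ℂ, z ≠ 0 ∧ M *ᵥ z = μ • z := by
  rw [spectrum.mem_iff, Matrix.isUnit_iff_isUnit_det, isUnit_iff_ne_zero, not_not,
    ← Matrix.exists_mulVec_eq_zero_iff] at hμ
  obtain ⟨z, hz, hMz⟩ := hμ
  refine ⟨z, hz, ?_⟩
  rw [Algebra.algebraMap_eq_smul_one, sub_mulVec, smul_mulVec, one_mulVec, sub_eq_zero] at hMz
  exact hMz.symm

end Spectrum

section MMatrix

variable {n : ℕ}

lemma finite_norm_spectrum (B : Matrix (Fin n) (Fin n) ℝ) :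
    {r : ℝ | ∃ μ ∈ spectrum ℂ (B.map (fun a => (a : ℂ))), r = ‖μ‖}.Finite := by
  simpa only [eq_comm (a := (_ : ℝ)), Set.image] using (B.map _).finite_spectrum.image (‖·‖)

lemma specRad_lt_of_mulVec_le {B : Matrix (Fin n) (Fin n) ℝ} (hB : ∀ i j, 0 ≤ B i j)
    {u : Fin n → ℝ} (hu : ∀ i, 0 < u i) {α : ℝ} (hα : 0 < α)
    (hBu : ∀ i, (B *ᵥ u) i ≤ α * u i)
    (hleak : ∀ Q : Finset (Fin n), Q.Nonempty → (∀ i ∈ Q, (B *ᵥ u) i = α * u i) →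
      ∃ i ∈ Q, ∃ j ∉ Q, B i j ≠ 0) :
    specRad B < α := by
  rcases Set.eq_empty_or_nonempty
    {r : ℝ | ∃ μ ∈ spectrum ℂ (B.map (fun a => (a : ℂ))), r = ‖μ‖} with h | h
  · rwa [specRad, h, Real.sSup_empty]
  rw [specRad, (finite_norm_spectrum B).csSup_lt_iff h]
  rintro _ ⟨μ, hμ, rfl⟩
  obtain ⟨z, hz, heig⟩ := exists_mulVec_eq_smul_of_mem_spectrum hμ
  exact norm_lt_of_mulVec_eq_smul hB hu hBu hleak hz heig

lemma IsMmat.isUnit_det {A : Matrix (Fin n) (Fin n) ℝ} (hA : IsMmat A) : IsUnit A.det := by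
  obtain ⟨α, B, -, hρ, rfl⟩ := hA
  by_contra hdet
  have hshift : algebraMap ℂ _ (α : ℂ) - B.map (fun a => (a : ℂ)) =
      (α • (1 : Matrix (Fin n) (Fin n) ℝ) - B).map Complex.ofRealHom := by
    ext i j
    by_cases h : i = j <;> simp [Algebra.algebraMap_eq_smul_one, h]
  have hmem : (α : ℂ) ∈ spectrum ℂ (B.map (fun a => (a : ℂ))) := by
    rw [spectrum.mem_iff, hshift, Matrix.isUnit_iff_isUnit_det, ← RingHom.mapMatrix_apply,
      ← RingHom.map_det, isUnit_iff_ne_zero, not_not, Complex.ofRealHom_eq_coe,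
      Complex.ofReal_eq_zero]
    simpa [isUnit_iff_ne_zero] using hdet
  have hle : ‖(α : ℂ)‖ ≤ specRad B :=
    le_csSup (finite_norm_spectrum B).bddAbove ⟨α, hmem, rfl⟩
  rw [Complex.norm_real, Real.norm_eq_abs] at hle
  exact (le_abs_self α).not_gt (hle.trans_lt hρ)

lemma isMmat_of_offDiag_nonpos {A : Matrix (Fin n) (Fin n) ℝ}
    (hA : ∀ i j, i ≠ j → A i j ≤ 0) {u : Fin n → ℝ} (hu : ∀ i, 0 < u i)
    (hAu : ∀ i, 0 ≤ (A *ᵥ u) i)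
    (hleak : ∀ Q : Finset (Fin n), Q.Nonempty → (∀ i ∈ Q, (A *ᵥ u) i = 0) →
      ∃ i ∈ Q, ∃ j ∉ Q, A i j ≠ 0) :
    IsMmat A := by
  set α : ℝ := 1 + ∑ i, |A i i|
  have hdiag : ∀ i, A i i + 1 ≤ α := fun i => by
    have := Finset.single_le_sum (fun k _ => abs_nonneg (A k k)) (Finset.mem_univ i)
    linarith [le_abs_self (A i i)]
  have hBu : ∀ i, ((α • 1 - A) *ᵥ u) i = α * u i - (A *ᵥ u) i := fun i => by
    simp [sub_mulVec, smul_mulVec]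
  have hB : ∀ i j, 0 ≤ (α • 1 - A) i j := fun i j => by
    rcases eq_or_ne i j with rfl | hij
    · simp only [Matrix.sub_apply, Matrix.smul_apply, one_apply_eq, smul_eq_mul, mul_one,
        sub_nonneg]
      linarith [hdiag i]
    · simp [Matrix.one_apply_ne hij, hA i j hij]
  refine ⟨α, α • 1 - A, hB, specRad_lt_of_mulVec_le hB hu (by positivity)
    (fun i => by linarith [hBu i, hAu i]) fun Q hQ hQu => ?_, (sub_sub_cancel _ _).symm⟩
  obtain ⟨i, hi, j, hj, hij⟩ := hleak Q hQ fun i hi => by linarith [hBu i, hQu i hi]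
  exact ⟨i, hi, j, hj, by simp [Matrix.one_apply_ne (ne_of_mem_of_not_mem hi hj), hij]⟩

lemma isMmat_one : IsMmat (1 : Matrix (Fin n) (Fin n) ℝ) :=
  isMmat_of_offDiag_nonpos (u := 1) (fun i j hij => (one_apply_ne hij).le) (fun _ => one_pos)
    (fun _ => by simp) fun Q ⟨i, hi⟩ hQ => by simpa using hQ i hi

end MMatrix

namespace CondT2

variable {n : ℕ} {T : Matrix (Fin n) (Fin n) ℝ} {v w : Fin n → ℝ}

lemma vecMul_eq_zero (hT : CondT2 T v w) : v ᵥ* T = 0 := by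
  have hv : v ∈ LinearMap.ker (mulVecLin Tᵀ) := hT.2.2.2.1 ▸ Submodule.mem_span_singleton_self v
  simpa [mulVec_transpose] using hv

lemma mulVec_eq_zero (hT : CondT2 T v w) : T *ᵥ w = 0 := by
  have hw : w ∈ LinearMap.ker (mulVecLin T) := hT.2.2.2.2.1 ▸ Submodule.mem_span_singleton_self w
  simpa using hw

lemma offDiag_nonpos (hT : CondT2 T v w) {i j : Fin n} (hij : i ≠ j) : T i j ≤ 0 := by
  obtain ⟨α, B, hB, -, hTB⟩ :=
    hT.2.2.2.2.2 1 (fun _ => zero_le_one) (Function.ne_iff.mpr ⟨i, one_ne_zero⟩)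
  have hTij := congrFun (congrFun hTB i) j
  simp only [diagonal_one', Matrix.add_apply, one_apply_ne hij, add_zero, Matrix.sub_apply,
    Matrix.smul_apply, smul_eq_mul, mul_zero, zero_sub] at hTij
  linarith [hB i j]

end CondT2

section Iteration

variable {n : ℕ}

noncomputable def iterMat (T : Matrix (Fin n) (Fin n) ℝ) (y : Fin n → ℝ) :
    Matrix (Fin n) (Fin n) ℝ :=
  1 - Pmat y + T * Pmat y

lemma Pmat_mulVec_apply (y x : Fin n → ℝ) (i : Fin n) :
    (Pmat y *ᵥ x) i = if 0 ≤ y i then x i else 0 := by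
  simp [Pmat, mulVec_diagonal]

lemma Pmat_eq_one_iff {y : Fin n → ℝ} : Pmat y = 1 ↔ 0 ≤ y := by
  rw [Pmat, ← diagonal_one, diagonal_eq_diagonal_iff, Pi.le_def]
  exact forall_congr' fun i => by split_ifs with h <;> simp [h]

lemma iterMat_mulVec (T : Matrix (Fin n) (Fin n) ℝ) (y x : Fin n → ℝ) :
    iterMat T y *ᵥ x = x - Pmat y *ᵥ x + T *ᵥ (Pmat y *ᵥ x) := by
  simp [iterMat, add_mulVec, sub_mulVec, mulVec_mulVec]

lemma iterMat_apply_of_ne (T : Matrix (Fin n) (Fin n) ℝ) (y : Fin n → ℝ) {i j : Fin n}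
    (hij : i ≠ j) : iterMat T y i j = if 0 ≤ y j then T i j else 0 := by
  simp [iterMat, Pmat, one_apply_ne hij, diagonal_apply_ne _ hij]

/-- The test vector is `w` on `{y ≥ 0}` and large elsewhere. Since `T w = 0`, on `{y ≥ 0}` the
vector `A u` is `-T (w - P w)`, a sum of nonnegative terms over the edges into `{y < 0}`. -/
lemma isMmat_iterMat {T : Matrix (Fin n) (Fin n) ℝ} (hirr : IsIrred T)
    (hT : ∀ i j, i ≠ j → T i j ≤ 0) {w : Fin n → ℝ} (hw : ∀ i, 0 < w i) (hTw : T *ᵥ w = 0)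
    {y : Fin n → ℝ} (hy : Pmat y ≠ 1) : IsMmat (iterMat T y) := by
  set Pw := Pmat y *ᵥ w
  set u : Fin n → ℝ := fun i => if 0 ≤ y i then w i else 1 + |(T *ᵥ Pw) i|
  have hPu : Pmat y *ᵥ u = Pw := by
    ext i; simp only [Pw, u, Pmat_mulVec_apply]; split_ifs <;> rfl
  have hTPw : ∀ i, (T *ᵥ Pw) i = ∑ j, -T i j * (w - Pw) j := fun i => by
    have : T *ᵥ Pw = -(T *ᵥ (w - Pw)) := by rw [mulVec_sub, hTw]; abel
    rw [this, Pi.neg_apply]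
    simp only [mulVec, dotProduct, ← Finset.sum_neg_distrib, neg_mul]
  have hterm : ∀ i, 0 ≤ y i → ∀ j, 0 ≤ -T i j * (w - Pw) j := fun i hi j => by
    simp only [Pw, Pi.sub_apply, Pmat_mulVec_apply]
    split_ifs with hj
    · simp
    · exact mul_nonneg (neg_nonneg.mpr (hT i j fun h => hj (h ▸ hi))) (by simpa using (hw j).le)
  have hAu : ∀ i, (iterMat T y *ᵥ u) i =
      if 0 ≤ y i then ∑ j, -T i j * (w - Pw) j else 1 + |(T *ᵥ Pw) i| + (T *ᵥ Pw) i := by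
    intro i
    rw [iterMat_mulVec, hPu, Pi.add_apply, Pi.sub_apply, ← hTPw]
    simp only [u, Pw, Pmat_mulVec_apply]
    split_ifs <;> ring
  refine isMmat_of_offDiag_nonpos (u := u) (fun i j hij => ?_) (fun i => ?_) (fun i => ?_) ?_
  · rw [iterMat_apply_of_ne T y hij]; split_ifs <;> simp [hT i j hij]
  · simp only [u]; split_ifs; exacts [hw i, by positivity]
  · rw [hAu]; split_ifs with hi
    · exact Finset.sum_nonneg fun j _ => hterm i hi j
    · linarith [neg_abs_le ((T *ᵥ Pw) i)]
  intro Q hQ hQu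
  have hQy : ∀ i ∈ Q, 0 ≤ y i := fun i hi => by
    by_contra h
    have := hQu i hi
    rw [hAu, if_neg h] at this
    linarith [neg_abs_le ((T *ᵥ Pw) i)]
  obtain ⟨i₀, hi₀⟩ : ∃ i, y i < 0 := by simpa [Pmat_eq_one_iff, Pi.le_def] using hy
  obtain ⟨i, hi, j, hj, hTij⟩ := hirr Q hQ fun h => (hi₀.not_ge (hQy i₀ (h ▸ Finset.mem_univ _)))
  refine ⟨i, hi, j, hj, ?_⟩
  rw [iterMat_apply_of_ne T y (ne_of_mem_of_not_mem hi hj), if_pos]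
  · exact hTij
  by_contra hyj
  have hsum := hQu i hi
  rw [hAu, if_pos (hQy i hi),
    Finset.sum_eq_zero_iff_of_nonneg fun j _ => hterm i (hQy i hi) j] at hsum
  have := hsum j (Finset.mem_univ _)
  simp [Pw, Pmat_mulVec_apply, hyj, hTij, (hw j).ne'] at this

lemma CondT2.isMmat_iterMat {T : Matrix (Fin n) (Fin n) ℝ} {v w : Fin n → ℝ}
    (hT : CondT2 T v w) {y : Fin n → ℝ} (hy : Pmat y ≠ 1) : IsMmat (iterMat T y) :=
  _root_.isMmat_iterMat hT.1 (fun _ _ => hT.offDiag_nonpos) hT.2.2.1 hT.mulVec_eq_zero hy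

end Iteration

section Fixpoint

variable {n : ℕ} {T : Matrix (Fin n) (Fin n) ℝ} {v b x y : Fin n → ℝ}

lemma Pmat_mulVec_eq_self_of_iterMat_mulVec (hv : ∀ i, 0 < v i) (hvT : v ᵥ* T = 0)
    (hvb : v ⬝ᵥ b ≤ 0) (hx : iterMat T y *ᵥ x = b) (hx0 : 0 ≤ x) : Pmat y *ᵥ x = x := by
  set r := x - Pmat y *ᵥ x
  have hb : v ⬝ᵥ b = ∑ i, v i * r i := by
    rw [← hx, iterMat_mulVec, dotProduct_add, dotProduct_mulVec, hvT, zero_dotProduct, add_zero]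
    rfl
  have hr : ∀ i, 0 ≤ r i := fun i => by
    simp only [r, Pi.sub_apply, Pmat_mulVec_apply]
    split_ifs
    · simp
    · simpa using hx0 i
  have hterms : ∀ i ∈ Finset.univ, 0 ≤ v i * r i := fun i _ => mul_nonneg (hv i).le (hr i)
  have hsum := (Finset.sum_eq_zero_iff_of_nonneg hterms).mp
    (le_antisymm (hb ▸ hvb) (Finset.sum_nonneg hterms))
  funext i
  have := (mul_eq_zero.mp (hsum i (Finset.mem_univ _))).resolve_left (hv i).ne'
  simpa [r, sub_eq_zero, eq_comm] using this

lemma Pmat_sub_Pmat_mulVec_eq_zero (hv : ∀ i, 0 < v i) (hvT : v ᵥ* T = 0)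
    (hvb : v ⬝ᵥ b ≤ 0) (hx : iterMat T y *ᵥ x = b) (hx0 : 0 ≤ x) :
    (Pmat x - Pmat y) *ᵥ x = 0 := by
  rw [sub_mulVec, Pmat_eq_one_iff.mpr hx0, one_mulVec,
    Pmat_mulVec_eq_self_of_iterMat_mulVec hv hvT hvb hx hx0, sub_self]

lemma iterMat_self_mulVec_eq (hv : ∀ i, 0 < v i) (hvT : v ᵥ* T = 0)
    (hvb : v ⬝ᵥ b ≤ 0) (hx : iterMat T y *ᵥ x = b) (hx0 : 0 ≤ x) : iterMat T x *ᵥ x = b := by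
  rw [← hx, iterMat_mulVec, iterMat_mulVec, Pmat_eq_one_iff.mpr hx0, one_mulVec,
    Pmat_mulVec_eq_self_of_iterMat_mulVec hv hvT hvb hx hx0]

end Fixpoint

section Newton

variable {n : ℕ}

open Classical in
/-- `x⁰ < 0` encodes `P⁰ = O`. The `else` branch is reached only once `Pᵏ = I`, and then it
freezes a solution of the piecewise linear system. -/
noncomputable def newtonIter (T : Matrix (Fin n) (Fin n) ℝ) (b : Fin n → ℝ) : ℕ → Fin n → ℝ
  | 0 => fun _ => -1
  | k + 1 =>
    if IsUnit (iterMat T (newtonIter T b k)).det then (iterMat T (newtonIter T b k))⁻¹ *ᵥ b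
    else newtonIter T b k

variable {T : Matrix (Fin n) (Fin n) ℝ} {b : Fin n → ℝ}

lemma Pmat_newtonIter_zero : Pmat (newtonIter T b 0) = 0 := by
  ext i j
  simp [newtonIter, Pmat, diagonal_apply]

lemma iterMat_newtonIter_zero : iterMat T (newtonIter T b 0) = 1 := by
  simp [iterMat, Pmat_newtonIter_zero]

lemma newtonIter_succ_of_isUnit {k : ℕ} (h : IsUnit (iterMat T (newtonIter T b k)).det) :
    newtonIter T b (k + 1) = (iterMat T (newtonIter T b k))⁻¹ *ᵥ b :=
  if_pos h

lemma newtonIter_succ_of_not_isUnit {k : ℕ} (h : ¬IsUnit (iterMat T (newtonIter T b k)).det) :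
    newtonIter T b (k + 1) = newtonIter T b k :=
  if_neg h

lemma iterMat_mulVec_newtonIter_succ {v w : Fin n → ℝ} (hT : CondT2 T v w)
    (hvb : v ⬝ᵥ b ≤ 0) (k : ℕ) :
    iterMat T (newtonIter T b k) *ᵥ newtonIter T b (k + 1) = b := by
  by_cases h : IsUnit (iterMat T (newtonIter T b k)).det
  · rw [newtonIter_succ_of_isUnit h, mulVec_mulVec, mul_nonsing_inv _ h, one_mulVec]
  cases k with
  | zero => simp [iterMat_newtonIter_zero] at h
  | succ k =>
    have hP : Pmat (newtonIter T b (k + 1)) = 1 :=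
      not_not.mp fun hP => h (hT.isMmat_iterMat hP).isUnit_det
    rw [newtonIter_succ_of_not_isUnit h]
    exact iterMat_self_mulVec_eq hT.2.1 hT.vecMul_eq_zero hvb
      (iterMat_mulVec_newtonIter_succ hT hvb k) (Pmat_eq_one_iff.mp hP)

end Newton

/-- If `T` is irreducible satisfying condition T2 and `vᵀb ≤ 0`, then the
iteration `P⁰ = O`, `(I − Pᵏ + T·Pᵏ)·x^{k+1} = b`, `Pᵏ = P(xᵏ)` is well defined until
convergence: there are iterates satisfying the recursion such that at every step `k` with
`Pᵏ ≠ I` either the exit condition `(P^{k+1} − Pᵏ)·x^{k+1} = 0` holds (and then `x^{k+1}`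
solves the piecewise linear system) or `P^{k+1} ≠ I`, and the matrix `I − Pᵏ + T·Pᵏ` is an
M-matrix at every step `k` before the exit condition occurs. -/
theorem stmt7 {n : ℕ} (T : Matrix (Fin n) (Fin n) ℝ) (v w : Fin n → ℝ)
    (hT : CondT2 T v w) (b : Fin n → ℝ) (hvb : v ⬝ᵥ b ≤ 0) :
    ∃ (x : ℕ → Fin n → ℝ) (P : ℕ → Matrix (Fin n) (Fin n) ℝ),
      P 0 = 0 ∧ (∀ k, 1 ≤ k → P k = Pmat (x k)) ∧
      (∀ k, (1 - P k + T * P k) *ᵥ x (k + 1) = b) ∧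
      (∀ k, P k ≠ 1 →
        ((P (k + 1) - P k) *ᵥ x (k + 1) = 0 ∧
           (1 - Pmat (x (k + 1)) + T * Pmat (x (k + 1))) *ᵥ x (k + 1) = b) ∨
        P (k + 1) ≠ 1) ∧
      (∀ k, (∀ j, j < k → (P (j + 1) - P j) *ᵥ x (j + 1) ≠ 0) →
        IsMmat (1 - P k + T * P k)) := by
  set x := newtonIter T b
  have hsolve := iterMat_mulVec_newtonIter_succ hT hvb
  have hexit : ∀ k, Pmat (x (k + 1)) = 1 →
      (Pmat (x (k + 1)) - Pmat (x k)) *ᵥ x (k + 1) = 0 ∧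
        iterMat T (x (k + 1)) *ᵥ x (k + 1) = b := by
    intro k hP
    have hx0 := Pmat_eq_one_iff.mp hP
    exact ⟨Pmat_sub_Pmat_mulVec_eq_zero hT.2.1 hT.vecMul_eq_zero hvb (hsolve k) hx0,
      iterMat_self_mulVec_eq hT.2.1 hT.vecMul_eq_zero hvb (hsolve k) hx0⟩
  refine ⟨x, fun k => Pmat (x k), Pmat_newtonIter_zero, fun _ _ => rfl, hsolve,
    fun k _ => (em _).imp (hexit k) id, fun k hk => ?_⟩
  show IsMmat (iterMat T (x k))
  cases k with
  | zero => simpa [x, iterMat_newtonIter_zero] using isMmat_one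
  | succ j => exact hT.isMmat_iterMat fun hP => hk j j.lt_succ_self (hexit j hP).1
end

section
/- Let T be an irreducible n×n real matrix satisfying condition T2 (null(Tᵀ) = span(v), null(T) = span(w) with v, w > 0 componentwise, and T + D is an M-matrix for every diagonal D ≥ O, D ≠ O), and let b ∈ ℝⁿ with vᵀb = 0. Then the piecewise linear system [I − P(x) + T·P(x)]·x = b has a solution, but the solution is not unique: every solution x satisfies P(x) = I, there exists a solution x* with min_i x*_i = 0, and the set of all solutions is exactly {x* + α·w : α ≥ 0}. -/
open Matrix

/-! Because `vᵀ T = 0`, the system reads `T x⁺ - x⁻ = b`, and pairing it with `v` gives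
`v ⬝ᵥ x⁻ = v ⬝ᵥ b = 0`; as `v > 0` this forces `x⁻ = 0`, so the solutions are exactly the
nonnegative solutions of `T x = b`. Since `ker T = span {w}`, the range of `T` has codimension one
and lies in `v^⊥`, hence equals it, so `T x = b` is solvable; its solutions form the line
`x₀ + ℝ w`, whose nonnegative part is the ray starting where the smallest entry reaches `0`. -/

open Module Submodule

section Field

variable {ι K : Type*} [Fintype ι] [Field K] {T : Matrix ι ι K} {w : ι → K}

lemma mulVec_eq_zero_of_ker_eq_span (hker : LinearMap.ker T.mulVecLin = span K {w}) :
    T *ᵥ w = 0 :=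
  hker.ge (mem_span_singleton_self w)

lemma exists_mulVec_eq_of_dotProduct_eq_zero [DecidableEq ι] {v : ι → K} (hv : v ≠ 0)
    (hvT : v ᵥ* T = 0) (hw : w ≠ 0) (hker : LinearMap.ker T.mulVecLin = span K {w}) {b : ι → K}
    (hb : v ⬝ᵥ b = 0) :
    ∃ x, T *ᵥ x = b := by
  set f := dotProductEquiv K ι v
  have hf : f ≠ 0 := (LinearEquiv.map_ne_zero_iff _).2 hv
  have hle : LinearMap.range T.mulVecLin ≤ LinearMap.ker f := by
    rintro _ ⟨x, rfl⟩
    simp [f, dotProduct_mulVec, hvT]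
  have hrank : finrank K (LinearMap.range T.mulVecLin) = finrank K (LinearMap.ker f) := by
    have h₁ := LinearMap.finrank_range_add_finrank_ker T.mulVecLin
    have h₂ := f.finrank_ker_add_one_of_ne_zero hf
    rw [hker, finrank_span_singleton hw] at h₁
    omega
  exact (eq_of_le_of_finrank_eq hle hrank).ge (show b ∈ LinearMap.ker f from hb)

end Field

section LinearOrderedField

variable {ι R : Type*} [Fintype ι] [Field R] [LinearOrder R] [IsStrictOrderedRing R]

lemma eq_zero_of_nonneg_of_dotProduct_eq_zero {v u : ι → R} (hv : ∀ i, 0 < v i)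
    (hu : 0 ≤ u) (h : v ⬝ᵥ u = 0) : u = 0 := by
  have hterm : ∀ i ∈ Finset.univ, v i * u i = 0 :=
    (Finset.sum_eq_zero_iff_of_nonneg fun i _ => mul_nonneg (hv i).le (hu i)).1 h
  funext i
  exact (mul_eq_zero.1 (hterm i (Finset.mem_univ i))).resolve_left (hv i).ne'

lemma exists_sub_smul_nonneg_and_eq_zero [Nonempty ι] (x w : ι → R) (hw : ∀ i, 0 < w i) :
    ∃ c : R, 0 ≤ x - c • w ∧ ∃ i, (x - c • w) i = 0 := by
  obtain ⟨i₀, -, hmin⟩ := Finset.exists_min_image Finset.univ (fun i => x i / w i)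
    Finset.univ_nonempty
  refine ⟨x i₀ / w i₀, fun i => ?_, i₀, ?_⟩
  · have := (le_div_iff₀ (hw i)).1 (hmin i (Finset.mem_univ i))
    simp only [Pi.zero_apply, Pi.sub_apply, Pi.smul_apply, smul_eq_mul]
    linarith
  · simp [div_mul_cancel₀ _ (hw i₀).ne']

lemma nonneg_and_mulVec_eq_iff {T : Matrix ι ι R} {w xs b : ι → R}
    (hw : ∀ i, 0 < w i) (hker : LinearMap.ker T.mulVecLin = span R {w}) (hxs_nonneg : 0 ≤ xs)
    (hxs : T *ᵥ xs = b) {i₀ : ι} (hi₀ : xs i₀ = 0) (x : ι → R) :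
    0 ≤ x ∧ T *ᵥ x = b ↔ ∃ α : R, 0 ≤ α ∧ x = xs + α • w := by
  have hTw := mulVec_eq_zero_of_ker_eq_span hker
  constructor
  · rintro ⟨hx, hTx⟩
    have hdiff : x - xs ∈ LinearMap.ker T.mulVecLin := by
      simp [Matrix.mulVec_sub, hTx, hxs]
    obtain ⟨α, hα⟩ := mem_span_singleton.1 (hker ▸ hdiff)
    have hx_eq : x = xs + α • w := by rw [hα, add_sub_cancel]
    refine ⟨α, ?_, hx_eq⟩
    have : 0 ≤ α * w i₀ := by simpa [hx_eq, hi₀] using hx i₀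
    exact nonneg_of_mul_nonneg_left this (hw i₀)
  · rintro ⟨α, hα, rfl⟩
    exact ⟨add_nonneg hxs_nonneg (smul_nonneg hα fun i => (hw i).le),
      by rw [Matrix.mulVec_add, Matrix.mulVec_smul, hTw, smul_zero, add_zero, hxs]⟩

end LinearOrderedField

section Pmat

variable {n : ℕ}

lemma Pmat_eq_one_of_nonneg {x : Fin n → ℝ} (hx : 0 ≤ x) : Pmat x = 1 := by
  simp [Pmat, show ∀ i, 0 ≤ x i from hx]

lemma Pmat_mulVec_self (x : Fin n → ℝ) : Pmat x *ᵥ x = x⁺ := by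
  funext i
  simp [Pmat, Matrix.mulVec_diagonal, posPart_eq_ite]

lemma one_sub_Pmat_add_mul_Pmat_mulVec (T : Matrix (Fin n) (Fin n) ℝ) (x : Fin n → ℝ) :
    (1 - Pmat x + T * Pmat x) *ᵥ x = T *ᵥ x⁺ - x⁻ := by
  rw [Matrix.add_mulVec, Matrix.sub_mulVec, Matrix.one_mulVec, ← Matrix.mulVec_mulVec,
    Pmat_mulVec_self]
  nth_rw 1 [← posPart_sub_negPart x]
  abel

lemma one_sub_Pmat_add_mul_Pmat_mulVec_eq_iff {T : Matrix (Fin n) (Fin n) ℝ} {v b : Fin n → ℝ}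
    (hv : ∀ i, 0 < v i) (hvT : v ᵥ* T = 0) (hvb : v ⬝ᵥ b = 0) (x : Fin n → ℝ) :
    (1 - Pmat x + T * Pmat x) *ᵥ x = b ↔ 0 ≤ x ∧ T *ᵥ x = b := by
  rw [one_sub_Pmat_add_mul_Pmat_mulVec]
  constructor
  · intro hsol
    have hdot : v ⬝ᵥ x⁻ = 0 := by
      simpa [← hsol, dotProduct_sub, dotProduct_mulVec, hvT] using hvb
    have hx : 0 ≤ x := negPart_eq_zero.1 <|
      eq_zero_of_nonneg_of_dotProduct_eq_zero hv (negPart_nonneg x) hdot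
    exact ⟨hx, by simpa [posPart_eq_self.2 hx, negPart_eq_zero.2 hx] using hsol⟩
  · rintro ⟨hx, hTx⟩
    simp [posPart_eq_self.2 hx, negPart_eq_zero.2 hx, hTx]

end Pmat

/-- If `T` is irreducible satisfying condition T2 and `vᵀb = 0`, the
piecewise linear system `[I − P(x) + T·P(x)]·x = b` has a solution, but not a unique one:
every solution `x` satisfies `P(x) = I`, there is a solution `x*` with `minᵢ x*ᵢ = 0`,
and the set of all solutions is exactly `{x* + α·w : α ≥ 0}`. -/
theorem stmt14 {n : ℕ} (hn : 0 < n) (T : Matrix (Fin n) (Fin n) ℝ) (v w : Fin n → ℝ)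
    (hT : CondT2 T v w) (b : Fin n → ℝ) (hvb : v ⬝ᵥ b = 0) :
    (∀ x : Fin n → ℝ, (1 - Pmat x + T * Pmat x) *ᵥ x = b → Pmat x = 1) ∧
    (∃ x y : Fin n → ℝ, (1 - Pmat x + T * Pmat x) *ᵥ x = b ∧
      (1 - Pmat y + T * Pmat y) *ᵥ y = b ∧ x ≠ y) ∧
    ∃ xs : Fin n → ℝ, (1 - Pmat xs + T * Pmat xs) *ᵥ xs = b ∧
      (∀ i, 0 ≤ xs i) ∧ (∃ i, xs i = 0) ∧
      ∀ x : Fin n → ℝ,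
        (1 - Pmat x + T * Pmat x) *ᵥ x = b ↔ ∃ α : ℝ, 0 ≤ α ∧ x = xs + α • w := by
  obtain ⟨-, hv, hw, hkerTt, hkerT, -⟩ := hT
  have : Nonempty (Fin n) := ⟨⟨0, hn⟩⟩
  have hvT : v ᵥ* T = 0 := by
    simpa [Matrix.mulVec_transpose] using mulVec_eq_zero_of_ker_eq_span hkerTt
  have hw0 : w ≠ 0 := fun h => (hw ⟨0, hn⟩).ne' (congrFun h _)
  obtain ⟨x₀, hx₀⟩ := exists_mulVec_eq_of_dotProduct_eq_zero
    (fun h => (hv ⟨0, hn⟩).ne' (congrFun h _)) hvT hw0 hkerT hvb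
  obtain ⟨c, hxs_nonneg, i₀, hi₀⟩ := exists_sub_smul_nonneg_and_eq_zero x₀ w hw
  set xs := x₀ - c • w
  have hxs : T *ᵥ xs = b := by
    rw [Matrix.mulVec_sub, Matrix.mulVec_smul, mulVec_eq_zero_of_ker_eq_span hkerT, smul_zero,
      sub_zero, hx₀]
  have hnonneg := one_sub_Pmat_add_mul_Pmat_mulVec_eq_iff hv hvT hvb
  have hsolutions := fun x =>
    (hnonneg x).trans (nonneg_and_mulVec_eq_iff hw hkerT hxs_nonneg hxs hi₀ x)
  have hxs_sol := (hsolutions xs).2 ⟨0, le_rfl, by simp⟩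
  refine ⟨fun x hx => Pmat_eq_one_of_nonneg ((hnonneg x).1 hx).1,
    ⟨xs, xs + w, hxs_sol, (hsolutions _).2 ⟨1, zero_le_one, by simp⟩, by simpa using hw0⟩,
    xs, hxs_sol, hxs_nonneg, ⟨i₀, hi₀⟩, hsolutions⟩
end

section
/- Let T be an irreducible n×n real matrix satisfying condition T2 (null(Tᵀ) = span(v), null(T) = span(w) with v, w > 0 componentwise, and T + D is an M-matrix for every diagonal D ≥ O, D ≠ O), and let b ∈ ℝⁿ with vᵀb > 0. Then the piecewise linear system [I − P(x) + T·P(x)]·x = b has no solution. -/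
open Matrix

/-! Multiplying the system by the left null vector `vᵀ` of `T` kills the term `T P(x) x`,
leaving `vᵀ b = vᵀ (I - P(x)) x = ∑_{xᵢ < 0} vᵢ xᵢ ≤ 0` since `v > 0`. -/

lemma CondT2.vecMul_eq_zero_s15 {n : ℕ} {T : Matrix (Fin n) (Fin n) ℝ} {v w : Fin n → ℝ}
    (hT : CondT2 T v w) : v ᵥ* T = 0 := by
  have hv : v ∈ LinearMap.ker (mulVecLin Tᵀ) :=
    hT.2.2.2.1 ▸ Submodule.mem_span_singleton_self v
  rwa [LinearMap.mem_ker, mulVecLin_apply, mulVec_transpose] at hv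

lemma dotProduct_add_mul_mulVec_of_vecMul_eq_zero {ι : Type*} [Fintype ι]
    {T : Matrix ι ι ℝ} {v : ι → ℝ} (hvT : v ᵥ* T = 0) (A B : Matrix ι ι ℝ) (x : ι → ℝ) :
    v ⬝ᵥ ((A + T * B) *ᵥ x) = v ⬝ᵥ (A *ᵥ x) := by
  rw [add_mulVec, dotProduct_add, ← mulVec_mulVec, dotProduct_mulVec v T, hvT,
    zero_dotProduct, add_zero]

lemma one_sub_Pmat_mulVec_self {n : ℕ} (x : Fin n → ℝ) :
    (1 - Pmat x) *ᵥ x = fun i => min (x i) 0 := by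
  ext i
  by_cases h : 0 ≤ x i
  · simp [Pmat, sub_mulVec, mulVec_diagonal, h]
  · simp [Pmat, sub_mulVec, mulVec_diagonal, h, (not_le.mp h).le]

lemma dotProduct_one_sub_Pmat_mulVec_self_nonpos {n : ℕ} {v : Fin n → ℝ} (hv : 0 ≤ v)
    (x : Fin n → ℝ) : v ⬝ᵥ ((1 - Pmat x) *ᵥ x) ≤ 0 := by
  rw [one_sub_Pmat_mulVec_self]
  exact Finset.sum_nonpos fun i _ => mul_nonpos_of_nonneg_of_nonpos (hv i) (min_le_right _ _)

/-- If `T` is irreducible satisfying condition T2 and `vᵀb > 0`, then the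
piecewise linear system `[I − P(x) + T·P(x)]·x = b` has no solution. -/
theorem stmt15 {n : ℕ} (T : Matrix (Fin n) (Fin n) ℝ) (v w : Fin n → ℝ)
    (hT : CondT2 T v w) (b : Fin n → ℝ) (hvb : 0 < v ⬝ᵥ b) :
    ¬ ∃ x : Fin n → ℝ, (1 - Pmat x + T * Pmat x) *ᵥ x = b := by
  rintro ⟨x, rfl⟩
  rw [dotProduct_add_mul_mulVec_of_vecMul_eq_zero hT.vecMul_eq_zero_s15] at hvb
  exact hvb.not_ge (dotProduct_one_sub_Pmat_mulVec_self_nonpos (fun i => (hT.2.1 i).le) x)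
end

section
/- Let T be an n×n real matrix and b ∈ ℝⁿ. If x ∈ ℝⁿ satisfies x + T·max{0,x} = b, then the vector y = max{0,x} is a solution of the linear complementarity problem: y + T·y ≥ b (componentwise), y ≥ 0 (componentwise), and yᵀ(y + T·y − b) = 0. -/
open Matrix

/-!
With `y = max{0, x}`, the equation gives `y + T y - b = y - x = max{0, -x}`: the residual is the
negative part of `x`, which is nonnegative and vanishes wherever the positive part `y` does not.
-/

section PositivePart

variable {R : Type*} [NonUnitalNonAssocRing R] [LinearOrder R]

lemma max_zero_mul_max_zero_sub_self (a : R) : max 0 a * (max 0 a - a) = 0 := by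
  rcases le_total a 0 with ha | ha
  · simp [max_eq_left ha]
  · simp [max_eq_right ha]

lemma dotProduct_max_zero_sub_self {ι : Type*} [Fintype ι] (x : ι → R) :
    (fun i => max 0 (x i)) ⬝ᵥ ((fun i => max 0 (x i)) - x) = 0 :=
  Finset.sum_eq_zero fun i _ => max_zero_mul_max_zero_sub_self (x i)

end PositivePart

/-- If `x` solves `x + T·max{0,x} = b`, then `y = max{0,x}` solves the LCP:
`y + T·y ≥ b`, `y ≥ 0`, `yᵀ(y + T·y − b) = 0`. -/
theorem stmt16 {n : ℕ} (T : Matrix (Fin n) (Fin n) ℝ) (b x : Fin n → ℝ)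
    (h : x + T *ᵥ (fun i => max 0 (x i)) = b) :
    ∀ y : Fin n → ℝ, y = (fun i => max 0 (x i)) →
      (∀ i, b i ≤ (y + T *ᵥ y) i) ∧ (∀ i, 0 ≤ y i) ∧ y ⬝ᵥ (y + T *ᵥ y - b) = 0 := by
  intro y hy
  have residual : y + T *ᵥ y - b = y - x := by
    rw [← h, hy]; abel
  refine ⟨fun i => ?_, fun i => hy ▸ le_max_left _ _, ?_⟩
  · rw [← sub_nonneg, ← Pi.sub_apply, residual, Pi.sub_apply, sub_nonneg, hy]
    exact le_max_right _ _
  · rw [residual, hy]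
    exact dotProduct_max_zero_sub_self x
end
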